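/- Let M be a complete metric space which has the approximate midpoint property and the finite binary intersection property. Then M has exact midpoints: for all x, y ∈ M there exists z ∈ M with d(x,z) = d(y,z) = d(x,y)/2. (In particular, M is a geodesic space.) -/

import Mathlib

/-!
Iterating approximate midpoints dyadically shows that two closed balls of positive radii meet
as soon as the distance of their centres is less than the sum of the radii. So if `w` is a
`2t`-approximate midpoint of `x` and `y`, with `d = dist x y`, the balls `B(x, d/2 + t)`,
`B(y, d/2 + t)` and `B(w, 3t)` meet pairwise, and the binary intersection property gives a
`t`-approximate midpoint within `3t` of `w`. Starting from a `1`-approximate midpoint and taking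
`t = 2⁻ⁿ` produces a Cauchy sequence, whose limit is an exact midpoint.
-/

open Metric Filter Topology

section

variable {M : Type*} [MetricSpace M]

def IsApproxMidpoint (x y : M) (t : ℝ) (z : M) : Prop :=
  dist x z ≤ dist x y / 2 + t ∧ dist y z ≤ dist x y / 2 + t

def HasApproxMidpoints (M : Type*) [MetricSpace M] : Prop :=
  ∀ x y : M, ∀ ε : ℝ, 0 < ε → ∃ z, IsApproxMidpoint x y ε z

def HasFiniteBinaryIntersection (M : Type*) [MetricSpace M] : Prop :=
  ∀ (n : ℕ) (x : Fin n → M) (δ : Fin n → ℝ),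
    (∀ i j, (closedBall (x i) (δ i) ∩ closedBall (x j) (δ j)).Nonempty) →
      (⋂ i, closedBall (x i) (δ i)).Nonempty

theorem IsApproxMidpoint.of_tendsto {x y l : M} {t : ℝ} {u : ℕ → M} {τ : ℕ → ℝ}
    (hu : ∀ n, IsApproxMidpoint x y (τ n) (u n)) (hl : Tendsto u atTop (𝓝 l))
    (hτ : Tendsto τ atTop (𝓝 t)) : IsApproxMidpoint x y t l :=
  ⟨le_of_tendsto_of_tendsto' (tendsto_const_nhds.dist hl) (tendsto_const_nhds.add hτ)
      fun n => (hu n).1,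
    le_of_tendsto_of_tendsto' (tendsto_const_nhds.dist hl) (tendsto_const_nhds.add hτ)
      fun n => (hu n).2⟩

theorem IsApproxMidpoint.dist_eq_half {x y z : M} (h : IsApproxMidpoint x y 0 z) :
    dist x z = dist x y / 2 ∧ dist y z = dist x y / 2 := by
  have htri := dist_triangle_right x y z
  obtain ⟨hx, hy⟩ := h
  constructor <;> linarith

theorem HasApproxMidpoints.exists_dist_le_add_div_two_pow (hmid : HasApproxMidpoints M)
    (n : ℕ) : ∀ {u v : M} {a b η : ℝ}, 0 ≤ a → 0 ≤ b → 0 < η → dist u v ≤ a + b →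
      ∃ w, dist u w ≤ a + (a + b) / 2 ^ n + η ∧ dist v w ≤ b + (a + b) / 2 ^ n + η := by
  induction n with
  | zero =>
    intro u v a b η ha hb hη huv
    refine ⟨u, ?_, ?_⟩ <;> simp only [dist_self, dist_comm v, pow_zero, div_one] <;> linarith
  | succ n ih =>
    intro u v a b η ha hb hη huv
    wlog hab : a ≤ b generalizing u v a b
    · obtain ⟨w, hvw, huw⟩ := this hb ha (by rwa [dist_comm, add_comm]) (le_of_not_ge hab)
      rw [add_comm b a] at hvw huw
      exact ⟨w, huw, hvw⟩
    -- As `a ≤ b`, the point sought is within about `(a + b) / 2` of `u`: recurse on `u` and an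
    -- approximate midpoint `m` of `u` and `v`.
    obtain ⟨m, hum, hvm⟩ := hmid u v (η / 4) (by positivity)
    obtain ⟨w, huw, hmw⟩ := ih (u := u) (v := m) (b := (a + b) / 2 - a + η / 4) (η := η / 4)
      ha (by linarith) (by positivity) (by linarith)
    have hsplit : (a + ((a + b) / 2 - a + η / 4)) / 2 ^ n =
        (a + b) / 2 ^ (n + 1) + η / 4 / 2 ^ n := by
      rw [pow_succ]; ring
    have hsmall : η / 4 / 2 ^ n ≤ η / 4 := div_le_self (by positivity) (one_le_pow₀ (by norm_num))
    exact ⟨w, by linarith, by linarith [dist_triangle v m w]⟩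

theorem HasApproxMidpoints.closedBall_inter_nonempty (hmid : HasApproxMidpoints M) {u v : M}
    {r s : ℝ} (hr : 0 < r) (hs : 0 < s) (h : dist u v < r + s) :
    (closedBall u r ∩ closedBall v s).Nonempty := by
  set ε := min (min r s) ((r + s - dist u v) / 2)
  have hεr : ε ≤ r := (min_le_left _ _).trans (min_le_left _ _)
  have hεs : ε ≤ s := (min_le_left _ _).trans (min_le_right _ _)
  have hεgap : ε ≤ (r + s - dist u v) / 2 := min_le_right _ _
  have hε : 0 < ε := lt_min (lt_min hr hs) (by linarith)
  have hlim : Tendsto (fun n : ℕ => (r + s) / 2 ^ n) atTop (𝓝 0) := by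
    simpa using tendsto_const_nhds.div_atTop (tendsto_pow_atTop_atTop_of_one_lt one_lt_two)
  obtain ⟨n, hn⟩ := (hlim.eventually (gt_mem_nhds (half_pos hε))).exists
  obtain ⟨w, huw, hvw⟩ := hmid.exists_dist_le_add_div_two_pow n (u := u) (v := v)
    (a := r - ε) (b := s - ε) (η := ε / 2) (by linarith) (by linarith) (half_pos hε)
    (by linarith)
  have : (r - ε + (s - ε)) / 2 ^ n ≤ (r + s) / 2 ^ n := by gcongr <;> linarith
  exact ⟨w, mem_closedBall'.2 (by linarith), mem_closedBall'.2 (by linarith)⟩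

theorem HasFiniteBinaryIntersection.closedBall_inter_inter_nonempty
    (hfbip : HasFiniteBinaryIntersection M) {x₁ x₂ x₃ : M} {r₁ r₂ r₃ : ℝ}
    (h₁₂ : (closedBall x₁ r₁ ∩ closedBall x₂ r₂).Nonempty)
    (h₁₃ : (closedBall x₁ r₁ ∩ closedBall x₃ r₃).Nonempty)
    (h₂₃ : (closedBall x₂ r₂ ∩ closedBall x₃ r₃).Nonempty) :
    (closedBall x₁ r₁ ∩ closedBall x₂ r₂ ∩ closedBall x₃ r₃).Nonempty := by
  have h₁ := h₁₂.mono Set.inter_subset_left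
  have h₂ := h₂₃.mono Set.inter_subset_left
  have h₃ := h₂₃.mono Set.inter_subset_right
  obtain ⟨z, hz⟩ := hfbip 3 ![x₁, x₂, x₃] ![r₁, r₂, r₃] fun i j => by
    fin_cases i <;> fin_cases j <;> simp [Set.inter_comm, *]
  simp only [Set.mem_iInter, Fin.forall_fin_succ] at hz
  exact ⟨z, ⟨hz.1, hz.2.1⟩, hz.2.2.1⟩

theorem exists_isApproxMidpoint_dist_le (hmid : HasApproxMidpoints M)
    (hfbip : HasFiniteBinaryIntersection M) {x y w : M} {t : ℝ} (ht : 0 < t)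
    (hw : IsApproxMidpoint x y (2 * t) w) :
    ∃ w', IsApproxMidpoint x y t w' ∧ dist w w' ≤ 3 * t := by
  obtain ⟨hxw, hyw⟩ := hw
  have hr : 0 < dist x y / 2 + t := by positivity
  have hxy : (closedBall x (dist x y / 2 + t) ∩ closedBall y (dist x y / 2 + t)).Nonempty :=
    hmid.closedBall_inter_nonempty hr hr (by linarith)
  have hxw' : (closedBall x (dist x y / 2 + t) ∩ closedBall w (3 * t)).Nonempty :=
    hmid.closedBall_inter_nonempty hr (by positivity) (by linarith)
  have hyw' : (closedBall y (dist x y / 2 + t) ∩ closedBall w (3 * t)).Nonempty :=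
    hmid.closedBall_inter_nonempty hr (by positivity) (by linarith)
  obtain ⟨w', ⟨hx, hy⟩, hw'⟩ := hfbip.closedBall_inter_inter_nonempty hxy hxw' hyw'
  exact ⟨w', ⟨mem_closedBall'.1 hx, mem_closedBall'.1 hy⟩, mem_closedBall'.1 hw'⟩

theorem exists_seq_tendsto_of_geometric_steps [CompleteSpace M] {P : ℕ → M → Prop} {C r : ℝ}
    (hr : r < 1) {w₀ : M} (h₀ : P 0 w₀)
    (hstep : ∀ n w, P n w → ∃ w', P (n + 1) w' ∧ dist w w' ≤ C * r ^ n) :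
    ∃ u : ℕ → M, ∃ l, (∀ n, P n (u n)) ∧ Tendsto u atTop (𝓝 l) := by
  have : Nonempty M := ⟨w₀⟩
  choose! next hnext using hstep
  let u : ℕ → M := fun n => Nat.rec w₀ next n
  have hu : ∀ n, P n (u n) := fun n => Nat.rec h₀ (fun n ih => (hnext n _ ih).1) n
  exact ⟨u, cauchySeq_tendsto_of_complete
    (cauchySeq_of_le_geometric r C hr fun n => (hnext n _ (hu n)).2) |>.imp fun _ => .intro hu⟩

end

theorem stmt10 {M : Type*} [MetricSpace M] [CompleteSpace M]
    (hmid : ∀ x y : M, ∀ ε : ℝ, 0 < ε →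
      ∃ z : M, dist x z ≤ dist x y / 2 + ε ∧ dist y z ≤ dist x y / 2 + ε)
    (hfbip : ∀ (n : ℕ) (x : Fin n → M) (δ : Fin n → ℝ),
      (∀ i j, (Metric.closedBall (x i) (δ i) ∩ Metric.closedBall (x j) (δ j)).Nonempty) →
      (⋂ i, Metric.closedBall (x i) (δ i)).Nonempty) :
    ∀ x y : M, ∃ z : M, dist x z = dist x y / 2 ∧ dist y z = dist x y / 2 := by
  intro x y
  obtain ⟨w₀, hw₀⟩ := hmid x y 1 one_pos
  obtain ⟨u, l, hu, hl⟩ := exists_seq_tendsto_of_geometric_steps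
    (P := fun n => IsApproxMidpoint x y ((1 / 2) ^ n)) (C := 3 / 2) (r := 1 / 2) (by norm_num)
    (by rw [pow_zero]; exact hw₀) fun n w hw => by
      obtain ⟨w', hw', hdist⟩ := exists_isApproxMidpoint_dist_le hmid hfbip
        (t := (1 / 2) ^ (n + 1)) (by positivity) (by convert hw using 1; ring)
      exact ⟨w', hw', hdist.trans_eq (by ring)⟩
  have hτ := tendsto_pow_atTop_nhds_zero_of_lt_one (by norm_num) (by norm_num : (1 / 2 : ℝ) < 1)
  exact ⟨l, (IsApproxMidpoint.of_tendsto hu hl hτ).dist_eq_half⟩
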